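/- arXiv:chao-dyn/9905021 — 6 statements merged into one kernel-verified Lean document; each statement's English description precedes it below -/
import Mathlib

section
/- Let h : ℝ → ℝ be continuous and periodic with period T > 0, and let Δt > 0 be such that Δt/T is irrational. Then for every shift s ∈ ℝ and every continuous function g : ℝ → ℝ, the sample averages (1/N) ∑_{n=0}^{N-1} g(h(n·Δt + s)) converge, as N → ∞, to (1/T) ∫_0^T g(h(t)) dt. In particular the limiting sample statistics are the same for every shift s, i.e. h has sampling stationarity with respect to the sampling interval Δt. -/
/-!
Weyl's equidistribution argument. Lift `g ∘ h` to a continuous function on the circle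
`ℝ ⧸ Tℤ`; sampling at `n Δt + s` is then the orbit of `s` under the rotation by `a = Δt`, an
element of infinite order. The continuous functions whose Birkhoff averages along this orbit
converge to their Haar mean form a subspace, and it is closed because the averages are
1-Lipschitz for the sup norm. Each character `χ_m`, `m ≠ 0`, is an eigenfunction of the rotation
with eigenvalue `χ_m(a) ≠ 1`, so its averages tend to `0 = ∫ χ_m`; as the characters span a dense
subspace, every continuous function is covered.
-/

open Filter MeasureTheory Set Topology

section BirkhoffAverage

variable (𝕜 : Type*) {α E : Type*} [RCLike 𝕜] [NormedAddCommGroup E] [NormedSpace 𝕜 E]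

theorem norm_birkhoffAverage_le (f : α → α) {g : α → E} {C : ℝ} (hC : ∀ x, ‖g x‖ ≤ C)
    (n : ℕ) (x : α) : ‖birkhoffAverage 𝕜 f g n x‖ ≤ C := by
  rcases eq_or_ne n 0 with rfl | hn
  · simpa using (norm_nonneg _).trans (hC x)
  calc ‖birkhoffAverage 𝕜 f g n x‖ = (n : ℝ)⁻¹ * ‖birkhoffSum f g n x‖ := by
        simp [birkhoffAverage, norm_smul]
    _ ≤ (n : ℝ)⁻¹ * (n * C) := by
        gcongr
        refine (norm_sum_le _ _).trans ?_
        simpa using Finset.sum_le_sum (s := Finset.range n) fun k _ ↦ hC (f^[k] x)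
    _ = C := by field_simp

variable {𝕜}

theorem birkhoffAverage_apply_of_comp_eq_smul {f : α → α} {g : α → E} {c : 𝕜}
    (h : g ∘ f = c • g) (n : ℕ) (x : α) :
    birkhoffAverage 𝕜 f g n (f x) = c • birkhoffAverage 𝕜 f g n x := by
  have hsum : birkhoffSum f g n (f x) = c • birkhoffSum f g n x := by
    simp only [birkhoffSum, Finset.smul_sum, ← Function.Commute.self_iterate f _ x]
    exact Finset.sum_congr rfl fun k _ ↦ congrFun h (f^[k] x)
  rw [birkhoffAverage, birkhoffAverage, hsum, smul_comm]

/-- Shifting the orbit by one step multiplies the averages by `c`, but changes them only by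
`O(1/n)`. -/
theorem tendsto_birkhoffAverage_zero_of_comp_eq_smul {f : α → α} {g : α → E}
    (hg : Bornology.IsBounded (range g)) {c : 𝕜} (hc : c ≠ 1) (h : g ∘ f = c • g) (x : α) :
    Tendsto (birkhoffAverage 𝕜 f g · x) atTop (𝓝 0) := by
  have hshift : Tendsto (fun n ↦ (c - 1) • birkhoffAverage 𝕜 f g n x) atTop (𝓝 0) := by
    simpa [birkhoffAverage_apply_of_comp_eq_smul h, sub_smul] using
      tendsto_birkhoffAverage_apply_sub_birkhoffAverage' 𝕜 hg f x
  simpa [smul_smul, inv_mul_cancel₀ (sub_ne_zero.mpr hc)] using hshift.const_smul (c - 1)⁻¹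

end BirkhoffAverage

section ContinuousMap

variable {𝕜 X : Type*} [RCLike 𝕜] [TopologicalSpace X] [CompactSpace X]

theorem lipschitzWith_birkhoffAverage_continuousMap (f : X → X) (n : ℕ) (x : X) :
    LipschitzWith 1 fun F : C(X, 𝕜) ↦ birkhoffAverage 𝕜 f F n x := by
  refine LipschitzWith.of_dist_le_mul fun F G ↦ ?_
  simpa [dist_eq_norm, birkhoffAverage_sub] using
    norm_birkhoffAverage_le 𝕜 f (F - G).norm_coe_le_norm n x

variable [MeasurableSpace X] [OpensMeasurableSpace X] (μ : Measure X)

theorem ContinuousMap.integrable {E : Type*} [NormedAddCommGroup E] [IsFiniteMeasure μ]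
    (F : C(X, E)) : Integrable F μ :=
  F.continuous.integrable_of_hasCompactSupport (.of_compactSpace F)

variable [IsProbabilityMeasure μ]

theorem lipschitzWith_integral_continuousMap :
    LipschitzWith 1 fun F : C(X, 𝕜) ↦ ∫ x, F x ∂μ := by
  refine LipschitzWith.of_dist_le_mul fun F G ↦ ?_
  rw [NNReal.coe_one, one_mul, dist_eq_norm, dist_eq_norm,
    ← integral_sub (F.integrable μ) (G.integrable μ)]
  simpa using norm_integral_le_of_norm_le_const (μ := μ)
    (.of_forall fun x ↦ (F - G).norm_coe_le_norm x)

variable (𝕜)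

def birkhoffConvergentSubmodule (f : X → X) (x : X) : Submodule 𝕜 C(X, 𝕜) where
  carrier := {F | Tendsto (birkhoffAverage 𝕜 f F · x) atTop (𝓝 (∫ y, F y ∂μ))}
  zero_mem' := by simp [birkhoffAverage, birkhoffSum]
  add_mem' {F G} hF hG := by
    simp only [mem_ofPred_eq, ContinuousMap.coe_add, birkhoffAverage_add, Pi.add_apply,
      integral_add (F.integrable μ) (G.integrable μ)] at hF hG ⊢
    exact hF.add hG
  smul_mem' c F hF := by
    simp only [mem_ofPred_eq, ContinuousMap.coe_smul, Pi.smul_apply, integral_smul] at hF ⊢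
    convert hF.const_smul c using 2 with n
    simp [birkhoffAverage, birkhoffSum, Finset.mul_sum, mul_left_comm]

theorem isClosed_birkhoffConvergentSubmodule (f : X → X) (x : X) :
    IsClosed (birkhoffConvergentSubmodule 𝕜 μ f x : Set C(X, 𝕜)) :=
  (LipschitzWith.uniformEquicontinuous _ 1 fun n ↦
    lipschitzWith_birkhoffAverage_continuousMap f n x).equicontinuous.isClosed_setOfPred_tendsto
    (lipschitzWith_integral_continuousMap μ).continuous

theorem tendsto_birkhoffAverage_integral_of_dense_span {f : X → X} {x : X} {s : Set C(X, 𝕜)}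
    (hs : (Submodule.span 𝕜 s).topologicalClosure = ⊤)
    (h : ∀ F ∈ s, Tendsto (birkhoffAverage 𝕜 f F · x) atTop (𝓝 (∫ y, F y ∂μ)))
    (F : C(X, 𝕜)) : Tendsto (birkhoffAverage 𝕜 f F · x) atTop (𝓝 (∫ y, F y ∂μ)) := by
  have hle : (Submodule.span 𝕜 s).topologicalClosure ≤ birkhoffConvergentSubmodule 𝕜 μ f x :=
    Submodule.topologicalClosure_minimal _ (Submodule.span_le.mpr h)
      (isClosed_birkhoffConvergentSubmodule 𝕜 μ f x)
  exact hle (hs ▸ Submodule.mem_top : F ∈ _)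

end ContinuousMap

namespace AddCircle

variable {T : ℝ}

theorem fourier_add_right (m : ℤ) (a y : AddCircle T) :
    fourier m (y + a) = fourier m a * fourier m y := by
  simp only [fourier_apply, smul_add, toCircle_add, Circle.coe_mul, mul_comm]

variable [Fact (0 < T)]

theorem fourier_ne_one_of_not_isOfFinAddOrder {a : AddCircle T} (ha : ¬IsOfFinAddOrder a)
    {m : ℤ} (hm : m ≠ 0) : fourier m a ≠ 1 := by
  rw [fourier_apply, ne_eq, ← Circle.coe_one, Circle.coe_inj, ← toCircle_zero,
    (injective_toCircle (Fact.out : 0 < T).ne').eq_iff]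
  exact fun h ↦ ha (isOfFinAddOrder_iff_zsmul_eq_zero.mpr ⟨m, hm, h⟩)

theorem integral_fourier_of_ne_zero {m : ℤ} (hm : m ≠ 0) :
    ∫ y, fourier m y ∂haarAddCircle (T := T) = 0 :=
  integral_eq_zero_of_add_right_eq_neg (fourier_add_half_inv_index hm Fact.out)

theorem tendsto_birkhoffAverage_fourier {a : AddCircle T} (ha : ¬IsOfFinAddOrder a) (m : ℤ)
    (x : AddCircle T) :
    Tendsto (birkhoffAverage ℂ (· + a) (fourier m) · x) atTop
      (𝓝 (∫ y, fourier m y ∂haarAddCircle (T := T))) := by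
  rcases eq_or_ne m 0 with rfl | hm
  · have h0 : ⇑(fourier 0 : C(AddCircle T, ℂ)) = 1 := funext fun _ ↦ fourier_zero
    refine tendsto_const_nhds.congr' ((eventually_ne_atTop 0).mono fun n hn ↦ ?_)
    simp only [h0, birkhoffAverage_of_comp_eq ℂ (f := (· + a)) (g := (1 : AddCircle T → ℂ)) rfl
      (Nat.cast_ne_zero.mpr hn)]
    simp
  · rw [integral_fourier_of_ne_zero hm]
    exact tendsto_birkhoffAverage_zero_of_comp_eq_smul
      (isCompact_range (fourier m).continuous).isBounded
      (fourier_ne_one_of_not_isOfFinAddOrder ha hm) (funext fun y ↦ fourier_add_right m a y) x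

theorem tendsto_birkhoffAverage_add_of_not_isOfFinAddOrder {a : AddCircle T}
    (ha : ¬IsOfFinAddOrder a) (F : C(AddCircle T, ℂ)) (x : AddCircle T) :
    Tendsto (birkhoffAverage ℂ (· + a) F · x) atTop (𝓝 (∫ y, F y ∂haarAddCircle)) :=
  tendsto_birkhoffAverage_integral_of_dense_span ℂ haarAddCircle span_fourier_closure_eq_top
    (by rintro _ ⟨m, rfl⟩; exact tendsto_birkhoffAverage_fourier ha m x) F

theorem tendsto_birkhoffAverage_add_of_not_isOfFinAddOrder_real {a : AddCircle T}
    (ha : ¬IsOfFinAddOrder a) (F : C(AddCircle T, ℝ)) (x : AddCircle T) :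
    Tendsto (birkhoffAverage ℝ (· + a) F · x) atTop (𝓝 (∫ y, F y ∂haarAddCircle)) := by
  rw [Complex.isometry_ofReal.isEmbedding.tendsto_nhds_iff]
  convert tendsto_birkhoffAverage_add_of_not_isOfFinAddOrder ha
    ((Complex.ofRealCLM : C(ℝ, ℂ)).comp F) x using 1
  · ext n
    exact map_birkhoffAverage ℝ ℂ Complex.ofRealHom (· + a) F n x
  · exact congrArg 𝓝 integral_ofReal.symm

theorem not_isOfFinAddOrder_coe_of_irrational {a : ℝ} (ha : Irrational (a / T)) :
    ¬IsOfFinAddOrder (a : AddCircle T) :=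
  not_isOfFinAddOrder_iff_forall_rat_ne_div.mpr fun q hq ↦ ha ⟨q, hq⟩

end AddCircle

namespace Function.Periodic

variable {f : ℝ → ℝ} {T : ℝ}

theorem integral_lift_haarAddCircle [Fact (0 < T)] (hper : Periodic f T) :
    ∫ y, hper.lift y ∂AddCircle.haarAddCircle (T := T) = T⁻¹ * ∫ t in (0 : ℝ)..T, f t := by
  rw [AddCircle.integral_haarAddCircle, smul_eq_mul, ← AddCircle.intervalIntegral_preimage T 0,
    zero_add]
  simp

theorem tendsto_average_mul_add_of_irrational (hT : 0 < T) (hf : Continuous f)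
    (hper : Periodic f T) {Δt : ℝ} (hirr : Irrational (Δt / T)) (s : ℝ) :
    Tendsto (fun N : ℕ ↦ (1 / (N : ℝ)) * ∑ n ∈ Finset.range N, f (n * Δt + s)) atTop
      (𝓝 ((1 / T) * ∫ t in (0 : ℝ)..T, f t)) := by
  have : Fact (0 < T) := ⟨hT⟩
  let F : C(AddCircle T, ℝ) := ⟨hper.lift, hf.quotient_liftOn' _⟩
  have hlim := AddCircle.tendsto_birkhoffAverage_add_of_not_isOfFinAddOrder_real
    (AddCircle.not_isOfFinAddOrder_coe_of_irrational hirr) F s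
  rw [show ∫ y, F y ∂AddCircle.haarAddCircle = _ from hper.integral_lift_haarAddCircle,
    ← one_div] at hlim
  refine hlim.congr fun N ↦ ?_
  simp only [birkhoffAverage, birkhoffSum, add_right_iterate_apply, smul_eq_mul, one_div]
  congr 1
  refine Finset.sum_congr rfl fun n _ ↦ ?_
  change hper.lift ((s : AddCircle T) + n • (Δt : AddCircle T)) = _
  rw [← AddCircle.coe_nsmul, ← AddCircle.coe_add, hper.lift_coe, nsmul_eq_mul, add_comm]

end Function.Periodic

theorem sampling_stationarity_of_periodic_incommensurate_general
    (h : ℝ → ℝ) (T : ℝ) (hT : 0 < T) (hcont : Continuous h)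
    (hper : ∀ t : ℝ, h (t + T) = h t)
    (Δt : ℝ) (hirr : Irrational (Δt / T)) :
    ∀ s : ℝ, ∀ g : ℝ → ℝ, Continuous g →
      Tendsto
        (fun N : ℕ => (1 / (N : ℝ)) * ∑ n ∈ Finset.range N, g (h (n * Δt + s)))
        atTop
        (nhds ((1 / T) * ∫ t in (0:ℝ)..T, g (h t))) :=
  fun s g hg ↦ Function.Periodic.tendsto_average_mul_add_of_irrational hT (hg.comp hcont)
    (fun t ↦ congrArg g (hper t)) hirr s

/-- A continuous periodic signal has sampling stationarity with respect to any
sampling interval incommensurate with its period: for every shift `s` and every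
continuous test function `g`, the sample averages converge to the waveform average
`(1/T) ∫_0^T g (h t) dt`, independently of `s`. -/
theorem sampling_stationarity_of_periodic_incommensurate
    (h : ℝ → ℝ) (T : ℝ) (hT : 0 < T) (hcont : Continuous h)
    (hper : ∀ t : ℝ, h (t + T) = h t)
    (Δt : ℝ) (hΔt : 0 < Δt) (hirr : Irrational (Δt / T)) :
    ∀ s : ℝ, ∀ g : ℝ → ℝ, Continuous g →
      Tendsto
        (fun N : ℕ => (1 / (N : ℝ)) * ∑ n ∈ Finset.range N, g (h (n * Δt + s)))
        atTop
        (nhds ((1 / T) * ∫ t in (0:ℝ)..T, g (h t))) :=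
  sampling_stationarity_of_periodic_incommensurate_general h T hT hcont hper Δt hirr
end

section
/- Let h : ℝ → ℝ be periodic with period T > 0 and let Δt = (p/q)·T where p, q are coprime positive integers. Then for every shift s ∈ ℝ and every function g : ℝ → ℝ, the sample averages (1/N) ∑_{n=0}^{N-1} g(h(n·Δt + s)) converge, as N → ∞, to (1/q) ∑_{j=0}^{q-1} g(h(s + j·T/q)). In particular, when the sampling interval is commensurate with the period, the limiting sample statistics are an average of q point evaluations and in general depend on the shift s. -/
open Filter Real

/-- Cesàro averages of a periodic sequence converge to the average over one period. -/
theorem cesaro_of_periodic_seq (f : ℕ → ℝ) (q : ℕ) (hq : 0 < q)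
    (hf : ∀ n, f (n + q) = f n) :
    Tendsto (fun N : ℕ => (1 / (N : ℝ)) * ∑ n ∈ Finset.range N, f n) atTop
      (nhds ((1 / (q : ℝ)) * ∑ j ∈ Finset.range q, f j)) := by
  set S := ∑ j ∈ Finset.range q, f j with hS
  set C := ∑ j ∈ Finset.range q, |f j| with hC
  have hqR : (0:ℝ) < q := by exact_mod_cast hq
  have key : ∀ m r : ℕ, ∑ n ∈ Finset.range (q * m + r), f n
      = m * S + ∑ n ∈ Finset.range r, f n := by
    intro m
    induction m with
    | zero => intro r; simp
    | succ m ih =>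
      intro r
      have hsplit : q * (m + 1) + r = q + (q * m + r) := by ring
      rw [hsplit, Finset.sum_range_add]
      have hq' : ∀ n, f (q + n) = f n := fun n => by rw [Nat.add_comm]; exact hf n
      simp only [hq']
      rw [ih r]
      push_cast
      ring
  have bound : ∀ N : ℕ, 1 ≤ N →
      |(1 / (N : ℝ)) * ∑ n ∈ Finset.range N, f n - (1 / (q : ℝ)) * S|
        ≤ (|S| + C) / N := by
    intro N hN
    have hNR : (0:ℝ) < N := by exact_mod_cast hN
    have hsplit : q * (N / q) + N % q = N := Nat.div_add_mod N q
    set m := N / q with hm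
    set r := N % q with hr
    have hrq : r < q := Nat.mod_lt N hq
    have hsum : ∑ n ∈ Finset.range N, f n = m * S + ∑ n ∈ Finset.range r, f n := by
      rw [← hsplit]; exact key m r
    set R := ∑ n ∈ Finset.range r, f n with hRdef
    have hRC : |R| ≤ C := by
      calc |R| ≤ ∑ n ∈ Finset.range r, |f n| := Finset.abs_sum_le_sum_abs _ _
        _ ≤ C := Finset.sum_le_sum_of_subset_of_nonneg
            (Finset.range_subset_range.mpr hrq.le) (fun i _ _ => abs_nonneg _)
    have hNcast : (N:ℝ) = q * m + r := by exact_mod_cast hsplit.symm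
    have heq : (1 / (N : ℝ)) * ∑ n ∈ Finset.range N, f n - (1 / (q : ℝ)) * S
        = S * ((m:ℝ)/N - 1/q) + R / N := by
      rw [hsum]; ring
    have h2 : (m:ℝ)/N - 1/q = -(r:ℝ)/((N:ℝ)*q) := by
      have hmq : (m:ℝ) * q - N = -r := by rw [hNcast]; ring
      field_simp
      linarith [hmq]
    rw [heq, h2]
    have habs : |S * (-(r:ℝ)/((N:ℝ)*q)) + R / N|
        ≤ |S| * ((r:ℝ)/((N:ℝ)*q)) + |R| / N := by
      calc |S * (-(r:ℝ)/((N:ℝ)*q)) + R / N|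
          ≤ |S * (-(r:ℝ)/((N:ℝ)*q))| + |R / N| := abs_add_le _ _
        _ = |S| * ((r:ℝ)/((N:ℝ)*q)) + |R| / N := by
            rw [abs_mul, abs_div, abs_div, abs_neg,
              abs_of_nonneg (by positivity : (0:ℝ) ≤ (r:ℝ)),
              abs_of_nonneg (by positivity : (0:ℝ) ≤ (N:ℝ)*q),
              abs_of_nonneg hNR.le]
    refine habs.trans ?_
    have h3 : (r:ℝ)/((N:ℝ)*q) ≤ 1 / N := by
      rw [div_le_div_iff₀ (by positivity) hNR]
      have : (r:ℝ) ≤ q := by exact_mod_cast hrq.le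
      nlinarith
    have h4 : |S| * ((r:ℝ)/((N:ℝ)*q)) ≤ |S| / N := by
      calc |S| * ((r:ℝ)/((N:ℝ)*q)) ≤ |S| * (1 / N) :=
            mul_le_mul_of_nonneg_left h3 (abs_nonneg _)
        _ = |S| / N := by ring
    have h5' : |R| / N ≤ C / N := by gcongr
    calc |S| * ((r:ℝ)/((N:ℝ)*q)) + |R| / N ≤ |S| / N + C / N := add_le_add h4 h5'
      _ = (|S| + C) / N := by ring
  rw [← tendsto_sub_nhds_zero_iff]
  have hlim : Tendsto (fun N : ℕ => (|S| + C) / (N : ℝ)) atTop (nhds 0) :=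
    tendsto_const_div_atTop_nhds_zero_nat _
  refine squeeze_zero_norm' ?_ hlim
  filter_upwards [eventually_ge_atTop 1] with N hN
  simpa [Real.norm_eq_abs] using bound N hN

/-- If a periodic signal with period `T` is sampled with an interval `Δt = (p/q)·T`
commensurate with `T` (`p`, `q` coprime positive integers), then for every shift `s`
and every test function `g` the sample averages converge to the average of the `q`
point evaluations `(1/q) ∑_{j<q} g (h (s + j·T/q))`, which in general depends on `s`. -/
theorem sample_statistics_commensurate_sampling
    (h : ℝ → ℝ) (T : ℝ) (hT : 0 < T) (hper : ∀ t : ℝ, h (t + T) = h t)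
    (p q : ℕ) (hp : 0 < p) (hq : 0 < q) (hpq : Nat.Coprime p q)
    (Δt : ℝ) (hΔt : Δt = ((p : ℝ) / (q : ℝ)) * T) :
    ∀ s : ℝ, ∀ g : ℝ → ℝ,
      Tendsto
        (fun N : ℕ => (1 / (N : ℝ)) * ∑ n ∈ Finset.range N, g (h (n * Δt + s)))
        atTop
        (nhds ((1 / (q : ℝ)) * ∑ j ∈ Finset.range q, g (h (s + j * T / q)))) := by
  intro s g
  have hqR : (0:ℝ) < q := by exact_mod_cast hq
  have hqΔt : (q:ℝ) * Δt = p * T := by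
    rw [hΔt]; field_simp
  -- iterated periodicity
  have hperN : ∀ (k : ℕ) (t : ℝ), h (t + k * T) = h t := by
    intro k
    induction k with
    | zero => intro t; simp
    | succ k ih =>
      intro t
      have : t + ((k:ℕ)+1 : ℕ) * T = (t + k * T) + T := by push_cast; ring
      rw [this, hper, ih]
  set f : ℕ → ℝ := fun n => g (h ((n:ℝ) * Δt + s)) with hf
  have hfper : ∀ n, f (n + q) = f n := by
    intro n
    have harg : ((n + q : ℕ) : ℝ) * Δt + s = ((n:ℝ) * Δt + s) + (p:ℕ) * T := by
      push_cast
      linear_combination hqΔt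
    simp only [hf]
    rw [harg, hperN p]
  -- value of f on one period
  have hval : ∀ n, f n = g (h (s + ((n * p) % q : ℕ) * T / q)) := by
    intro n
    have hdm : q * ((n * p) / q) + (n * p) % q = n * p := Nat.div_add_mod (n * p) q
    have harg : (n:ℝ) * Δt + s
        = (s + ((n * p) % q : ℕ) * T / q) + ((n * p / q : ℕ) : ℝ) * T := by
      rw [hΔt]
      have : ((n:ℝ)) * p = q * ((n * p / q : ℕ) : ℝ) + ((n * p % q : ℕ) : ℝ) := by
        exact_mod_cast hdm.symm
      field_simp
      nlinarith [this]
    simp only [hf]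
    rw [harg, hperN]
  -- reindexing sum over one period
  have hinj : Set.InjOn (fun n => (n * p) % q) (Finset.range q) := by
    intro a ha b hb hab
    simp only [Finset.coe_range, Set.mem_Iio] at ha hb
    have : a % q = b % q :=
      (Nat.ModEq.cancel_right_of_coprime (by simpa [Nat.coprime_comm] using hpq) hab)
    rwa [Nat.mod_eq_of_lt ha, Nat.mod_eq_of_lt hb] at this
  have himg : Finset.image (fun n => (n * p) % q) (Finset.range q) = Finset.range q := by
    apply Finset.eq_of_subset_of_card_le
    · intro x hx
      simp only [Finset.mem_image, Finset.mem_range] at hx ⊢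
      obtain ⟨n, _, rfl⟩ := hx
      exact Nat.mod_lt _ hq
    · rw [Finset.card_image_of_injOn hinj]
  have hinj2 : ∀ a ∈ Finset.range q, ∀ b ∈ Finset.range q,
      (a * p) % q = (b * p) % q → a = b := fun a ha b hb hab =>
    hinj (Finset.mem_coe.mpr ha) (Finset.mem_coe.mpr hb) hab
  have hsumeq : ∑ n ∈ Finset.range q, f n
      = ∑ j ∈ Finset.range q, g (h (s + (j:ℝ) * T / q)) := by
    have h1 : ∑ j ∈ Finset.range q, g (h (s + (j:ℝ) * T / q))
        = ∑ n ∈ Finset.range q, g (h (s + ((n * p) % q : ℕ) * T / q)) := by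
      conv_lhs => rw [← himg]
      exact Finset.sum_image hinj2
    rw [h1]
    exact Finset.sum_congr rfl (fun n _ => hval n)
  have := cesaro_of_periodic_seq f q hq hfper
  rw [hsumeq] at this
  exact this
end

section
/- Let T > 0, let c_1, …, c_m be nonzero integers, set f̂_i = c_i/T, let m₀ be a positive integer, and set f_i = m₀ · f̂_i. Let A_i, φ_i ∈ ℝ, let μ be the uniform probability measure on [0, T/m₀), and define the reconstructed process x_r(t, θ) = ∑_{i=1}^m A_i sin(2π f̂_i t + 2π f_i θ + φ_i). Then for every t ∈ ℝ, the pushforward of μ under θ ↦ x_r(t, θ) equals the pushforward of μ under θ ↦ x_r(0, θ). That is, when undersampling preserves the ratios between frequencies (each original frequency f_i aliases to f̂_i = f_i/m₀), the reconstructed randomly shifted process is again stationary in its one-dimensional distributions. -/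
open MeasureTheory Real

/-- When undersampling preserves the ratios between frequencies (each original frequency
`f i = m₀ · fhat i` aliases to `fhat i = c i / T`), the reconstructed randomly shifted
process `x_r t θ = ∑ A i sin (2π fhat i t + 2π f i θ + φ i)`, with `θ` uniform on
`[0, T/m₀)`, is again stationary in its one-dimensional distributions. -/
theorem ratio_preserving_alias_stationary
    (T : ℝ) (hT : 0 < T) (m : ℕ) (c : Fin m → ℤ) (hc : ∀ i, c i ≠ 0)
    (fhat : Fin m → ℝ) (hfhat : ∀ i, fhat i = (c i : ℝ) / T)
    (m₀ : ℕ) (hm₀ : 0 < m₀)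
    (f : Fin m → ℝ) (hf : ∀ i, f i = (m₀ : ℝ) * fhat i)
    (A φ : Fin m → ℝ)
    (x_r : ℝ → ℝ → ℝ)
    (hx_r : ∀ t θ : ℝ, x_r t θ =
      ∑ i, A i * Real.sin (2 * π * fhat i * t + 2 * π * f i * θ + φ i)) :
    ∀ t : ℝ,
      Measure.map (fun θ : ℝ => x_r t θ)
          ((ENNReal.ofReal ((m₀ : ℝ) / T)) •
            volume.restrict (Set.Ico (0:ℝ) (T / (m₀ : ℝ))))
        = Measure.map (fun θ : ℝ => x_r 0 θ)
          ((ENNReal.ofReal ((m₀ : ℝ) / T)) •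
            volume.restrict (Set.Ico (0:ℝ) (T / (m₀ : ℝ)))) := by
  intro t
  have hm₀R : (0:ℝ) < (m₀:ℝ) := by exact_mod_cast hm₀
  set L : ℝ := T / (m₀:ℝ) with hLdef
  have hL0 : 0 < L := div_pos hT hm₀R
  haveI : Fact (0 < L) := ⟨hL0⟩
  set g : ℝ → ℝ := fun θ => x_r 0 θ with hg
  have hgeq : g = fun θ => ∑ i, A i * Real.sin (2 * π * fhat i * 0 + 2 * π * f i * θ + φ i) :=
    funext fun θ => hx_r 0 θ
  have hgcont : Continuous g := by
    rw [hgeq]; fun_prop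
  have hper : Function.Periodic g L := by
    intro θ
    rw [hgeq]
    refine Finset.sum_congr rfl fun i _ => ?_
    congr 1
    have hfL : f i * L = (c i : ℝ) := by
      rw [hf, hfhat, hLdef]; field_simp
    have : 2 * π * fhat i * 0 + 2 * π * f i * (θ + L) + φ i
        = (2 * π * fhat i * 0 + 2 * π * f i * θ + φ i) + (c i : ℝ) * (2 * π) := by
      rw [← hfL]; ring
    rw [this, Real.sin_add_int_mul_two_pi]
  set s : ℝ := t / (m₀:ℝ) with hs
  have hshift : (fun θ => x_r t θ) = fun θ => g (θ + s) := by
    funext θ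
    rw [hgeq, hx_r]
    refine Finset.sum_congr rfl fun i _ => ?_
    congr 1
    have h1 : f i * s = fhat i * t := by
      rw [hf, hs]; field_simp
    have : 2 * π * fhat i * 0 + 2 * π * f i * (θ + s) + φ i
        = 2 * π * (f i * s) + 2 * π * f i * θ + φ i := by ring
    rw [this, h1]; ring
  -- measure theory part
  set μ₀ : Measure ℝ := volume.restrict (Set.Ico (0:ℝ) L) with hμ₀
  have hμIoc : μ₀ = volume.restrict (Set.Ioc (0:ℝ) L) :=
    Measure.restrict_congr_set Ico_ae_eq_Ioc
  set G : AddCircle L → ℝ := hper.lift with hG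
  have hGcont : Continuous G := continuous_coinduced_dom.mpr hgcont
  have hmkmeas : Measurable ((↑) : ℝ → AddCircle L) := (AddCircle.measurePreserving_mk L 0).measurable
  have hmapmk : Measure.map ((↑) : ℝ → AddCircle L) μ₀ = volume := by
    rw [hμIoc]
    have := (AddCircle.measurePreserving_mk L 0).map_eq
    rwa [zero_add] at this
  have hg_eq : Measure.map g μ₀ = Measure.map G volume := by
    have hcomp : g = G ∘ ((↑) : ℝ → AddCircle L) := funext fun θ => (hper.lift_coe θ).symm
    rw [hcomp, ← Measure.map_map hGcont.measurable hmkmeas, hmapmk]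
  have ht_eq : Measure.map (fun θ => x_r t θ) μ₀ = Measure.map G volume := by
    rw [hshift]
    have hcomp : (fun θ => g (θ + s))
        = G ∘ ((fun y : AddCircle L => (s:ℝ) + y) ∘ ((↑) : ℝ → AddCircle L)) := by
      funext θ
      simp only [Function.comp_apply]
      rw [← hper.lift_coe (θ + s)]
      rw [add_comm θ s, AddCircle.coe_add]
    rw [hcomp, ← Measure.map_map hGcont.measurable (by fun_prop),
      ← Measure.map_map (by fun_prop : Measurable (fun y : AddCircle L => (s:ℝ) + y)) hmkmeas,
      hmapmk, map_add_left_eq_self volume ((s:ℝ) : AddCircle L)]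
  rw [Measure.map_smul, Measure.map_smul, ht_eq, hg_eq]
end

section
/- Let Δt > 0, let T > 0, let f_1, …, f_m ∈ ℝ satisfy f_i · T ∈ ℤ for all i, let k_1, …, k_m be integers, set f̂_i = f_i + k_i/Δt, let A_i, φ_i ∈ ℝ, and let μ be the uniform probability measure on [0, T). Define the reconstructed process x_r(t, θ) = ∑_{i=1}^m A_i sin(2π f̂_i t + 2π f_i θ + φ_i). Then for every t ∈ ℝ, the pushforward of μ under θ ↦ x_r(t + Δt, θ) equals the pushforward of μ under θ ↦ x_r(t, θ). That is, the reconstructed process is cyclostationary with period equal to the sampling interval Δt. -/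
open MeasureTheory Real

lemma map_restrict_Ioc_of_periodic {T : ℝ} (hT : 0 < T) {g : ℝ → ℝ}
    (hg : Measurable g) (hp : Function.Periodic g T) (a : ℝ) :
    Measure.map g (volume.restrict (Set.Ioc a (a + T)))
      = Measure.map g (volume.restrict (Set.Ioc 0 T)) := by
  haveI : Fact (0 < T) := ⟨hT⟩
  have hlift_eq : hp.lift = g ∘ (fun y : Set.Ioc (0:ℝ) (0 + T) => (y : ℝ))
      ∘ (AddCircle.measurableEquivIoc T 0) := by
    funext x
    have hx : ((((AddCircle.measurableEquivIoc T 0) x : Set.Ioc (0:ℝ) (0+T)) : ℝ) : AddCircle T)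
        = x := (AddCircle.measurableEquivIoc T 0).symm_apply_apply x
    calc hp.lift x
        = hp.lift ((((AddCircle.measurableEquivIoc T 0) x : Set.Ioc (0:ℝ) (0+T)) : ℝ)
            : AddCircle T) := by rw [hx]
      _ = g (((AddCircle.measurableEquivIoc T 0) x : Set.Ioc (0:ℝ) (0+T)) : ℝ) :=
            hp.lift_coe _
      _ = _ := rfl
  have hlift : Measurable hp.lift := by
    rw [hlift_eq]
    exact (hg.comp measurable_subtype_coe).comp
      (AddCircle.measurableEquivIoc T 0).measurable
  have hmk : Measurable ((↑) : ℝ → AddCircle T) := AddCircle.measurable_mk'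
  have key : ∀ b : ℝ, Measure.map g (volume.restrict (Set.Ioc b (b + T)))
      = Measure.map hp.lift volume := by
    intro b
    show Measure.map (hp.lift ∘ ((↑) : ℝ → AddCircle T)) (volume.restrict (Set.Ioc b (b + T)))
        = Measure.map hp.lift volume
    rw [← Measure.map_map hlift hmk, (AddCircle.measurePreserving_mk T b).map_eq]
  have k0 := key 0
  rw [zero_add] at k0
  rw [key a, ← k0]

/-- The reconstructed randomly shifted process
`x_r t θ = ∑ A i sin (2π (f i + k i/Δt) t + 2π f i θ + φ i)` (each frequency `f i`, with
`f i · T ∈ ℤ`, replaced by an alias `f i + k i / Δt`; `θ` uniform on `[0,T)`) is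
cyclostationary with period equal to the sampling interval `Δt`: its one-time
distribution at time `t + Δt` equals its one-time distribution at time `t`. -/
theorem reconstructed_process_cyclostationary
    (Δt T : ℝ) (hΔt : 0 < Δt) (hT : 0 < T) (m : ℕ)
    (f : Fin m → ℝ) (hfT : ∀ i, ∃ z : ℤ, f i * T = (z : ℝ))
    (k : Fin m → ℤ) (fhat : Fin m → ℝ)
    (hfhat : ∀ i, fhat i = f i + (k i : ℝ) / Δt)
    (A φ : Fin m → ℝ)
    (x_r : ℝ → ℝ → ℝ)
    (hx_r : ∀ t θ : ℝ, x_r t θ =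
      ∑ i, A i * Real.sin (2 * π * fhat i * t + 2 * π * f i * θ + φ i)) :
    ∀ t : ℝ,
      Measure.map (fun θ : ℝ => x_r (t + Δt) θ)
          ((ENNReal.ofReal (1 / T)) • volume.restrict (Set.Ico (0:ℝ) T))
        = Measure.map (fun θ : ℝ => x_r t θ)
          ((ENNReal.ofReal (1 / T)) • volume.restrict (Set.Ico (0:ℝ) T)) := by
  intro t
  set g : ℝ → ℝ := fun θ => x_r t θ with hg_def
  have hg_eq : g = fun θ => ∑ i, A i * Real.sin (2 * π * fhat i * t + 2 * π * f i * θ + φ i) := by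
    funext θ; exact hx_r t θ
  have hg : Measurable g := by
    rw [hg_eq]; fun_prop
  have hper : Function.Periodic g T := by
    intro θ
    rw [hg_eq]
    refine Finset.sum_congr rfl fun i _ => ?_
    obtain ⟨z, hz⟩ := hfT i
    congr 1
    have : 2 * π * fhat i * t + 2 * π * f i * (θ + T) + φ i
        = (2 * π * fhat i * t + 2 * π * f i * θ + φ i) + (z : ℝ) * (2 * π) := by
      have : f i * T = (z : ℝ) := hz
      linear_combination (2 * π) * hz
    rw [this, Real.sin_add_int_mul_two_pi]
  have hshift : (fun θ : ℝ => x_r (t + Δt) θ) = g ∘ (fun θ => θ + Δt) := by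
    funext θ
    simp only [Function.comp, hg_def]
    rw [hx_r, hx_r]
    refine Finset.sum_congr rfl fun i _ => ?_
    congr 1
    have h1 : 2 * π * fhat i * (t + Δt) + 2 * π * f i * θ + φ i
        = (2 * π * fhat i * t + 2 * π * f i * (θ + Δt) + φ i) + (k i : ℝ) * (2 * π) := by
      rw [hfhat i]
      field_simp
      ring
    rw [h1, Real.sin_add_int_mul_two_pi]
  have hIcoIoc : volume.restrict (Set.Ico (0:ℝ) T) = volume.restrict (Set.Ioc 0 T) :=
    Measure.restrict_congr_set Ico_ae_eq_Ioc
  have htrans : Measure.map (fun θ : ℝ => θ + Δt) (volume.restrict (Set.Ioc 0 T))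
      = volume.restrict (Set.Ioc Δt (Δt + T)) := by
    have hpre : (fun θ : ℝ => θ + Δt) ⁻¹' Set.Ioc Δt (Δt + T) = Set.Ioc 0 T := by
      ext x
      simp only [Set.mem_preimage, Set.mem_Ioc]
      constructor <;> rintro ⟨h1, h2⟩ <;> exact ⟨by linarith, by linarith⟩
    rw [← hpre, ← Measure.restrict_map (measurable_add_const Δt) measurableSet_Ioc,
      map_add_right_eq_self volume Δt]
  rw [Measure.map_smul, Measure.map_smul, hIcoIoc, hshift,
    ← Measure.map_map hg (measurable_add_const Δt), htrans]
  congr 1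
  have : Δt + T = Δt + T := rfl
  exact map_restrict_Ioc_of_periodic hT hg hper Δt
end

section
/- Define x_r(t, θ) = sin(2π·0.25·t + 2π·0.25·θ) + sin(−2π·0.25·t + 2π·0.75·θ), the reconstruction of the process sin(2π·0.25(t+θ)) + sin(2π·0.75(t+θ)) undersampled with Δt = 1. Then the sixth moment satisfies, for every t ∈ ℝ, (1/4) ∫_0^4 x_r(t, θ)⁶ dθ = 25/4 − (45/16)·cos(2π t). In particular the sixth moment is a nonconstant function of t, so the reconstructed process is nonstationary, even though both components of the reconstruction lie at the same frequency (0.25 and its negative). -/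
open Real

/-!
With `a = π t / 2` and `u = π θ / 2`, the range `θ ∈ [0, 4]` becomes one period `u ∈ [0, 2π]`,
and sum-to-product gives `x_r = 2 sin 2u · cos (u - a) = 2 cos (2 (u - π / 4)) · cos (u - a)`.
Power reduction of `cos⁶` turns both sixth powers into cosine polynomials in `u`, with frequencies
`0, 4, 8, 12` and `0, 2, 4, 6`. By orthogonality only the products of equal frequencies `0` and `4`
survive the integration, and the frequency-`4` product carries the phase `4a = 2π t`.
-/

lemma integral_cos_int_mul_add {k : ℤ} (hk : k ≠ 0) (c : ℝ) :
    ∫ u in (0 : ℝ)..2 * π, cos (k * u + c) = 0 := by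
  rw [intervalIntegral.integral_comp_mul_add (fun x => cos x) (Int.cast_ne_zero.mpr hk),
    integral_cos, mul_zero, zero_add, add_comm, sin_add_int_mul_two_pi, sub_self, smul_zero]

lemma integral_cos_mul_cos_eq_ite (m n : ℕ) (b c : ℝ) :
    ∫ u in (0 : ℝ)..2 * π, cos (m * (u - b)) * cos (n * (u - c)) =
      if m = n then (if m = 0 then 2 * π else π * cos (m * (b - c))) else 0 := by
  have hprod (u : ℝ) : cos (m * (u - b)) * cos (n * (u - c)) =
      (cos (((m - n : ℤ) : ℝ) * u + (n * c - m * b)) +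
        cos (((m + n : ℤ) : ℝ) * u + -(m * b + n * c))) / 2 := by
    have := two_mul_cos_mul_cos (m * (u - b)) (n * (u - c))
    push_cast
    rw [show ((m : ℝ) - n) * u + (n * c - m * b) = m * (u - b) - n * (u - c) by ring,
      show ((m : ℝ) + n) * u + -(m * b + n * c) = m * (u - b) + n * (u - c) by ring]
    linarith
  have hint (k : ℤ) (d : ℝ) :
      IntervalIntegrable (fun u => cos (k * u + d)) MeasureTheory.volume 0 (2 * π) :=
    Continuous.intervalIntegrable (by fun_prop) _ _
  simp_rw [hprod, intervalIntegral.integral_div]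
  rw [intervalIntegral.integral_add (hint _ _) (hint _ _)]
  split_ifs with hmn hm
  · subst hmn hm
    simp
  · subst hmn
    rw [integral_cos_int_mul_add (k := m + m) (by omega)]
    simp only [sub_self, Int.cast_zero, zero_mul, zero_add, intervalIntegral.integral_const,
      sub_zero, smul_eq_mul, add_zero]
    rw [← cos_neg]
    ring_nf
  · rw [integral_cos_int_mul_add (by omega), integral_cos_int_mul_add (by omega)]
    simp

lemma cos_pow_six (y : ℝ) :
    32 * cos y ^ 6 = ∑ j : Fin 4, ![10, 15, 6, 1] j * cos ((2 * j : ℕ) * y) := by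
  have h4 : cos (2 * 2 * y) = 2 * cos (2 * y) ^ 2 - 1 := by rw [mul_assoc, cos_two_mul]
  have h6 : cos (2 * 3 * y) = 4 * cos (2 * y) ^ 3 - 3 * cos (2 * y) := by
    rw [show 2 * 3 * y = 3 * (2 * y) by ring, cos_three_mul]
  simp [Fin.sum_univ_four, h4, h6, cos_two_mul]
  ring

lemma sin_add_sin_three_mul_sub (u a : ℝ) :
    sin (u + a) + sin (3 * u - a) = 2 * cos (2 * (u - π / 4)) * cos (u - a) := by
  rw [sin_add_sin, show 2 * (u - π / 4) = (u + a + (3 * u - a)) / 2 - π / 2 by ring,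
    cos_sub_pi_div_two, ← cos_neg]
  ring_nf

lemma integral_sin_add_sin_three_mul_sub_pow_six (a : ℝ) :
    ∫ u in (0 : ℝ)..2 * π, (sin (u + a) + sin (3 * u - a)) ^ 6 =
      2 * π * (25 / 4 - 45 / 16 * cos (4 * a)) := by
  have hexpand (u : ℝ) : (sin (u + a) + sin (3 * u - a)) ^ 6 = 1 / 16 *
      ∑ i : Fin 4, ∑ j : Fin 4, ![10, 15, 6, 1] i * ![10, 15, 6, 1] j *
        (cos ((2 * (2 * i) : ℕ) * (u - π / 4)) * cos ((2 * j : ℕ) * (u - a))) := by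
    have hfreq (i : Fin 4) :
        cos ((2 * i : ℕ) * (2 * (u - π / 4))) = cos ((2 * (2 * i) : ℕ) * (u - π / 4)) := by
      push_cast
      ring_nf
    rw [sin_add_sin_three_mul_sub, show ∀ p q : ℝ, (2 * p * q) ^ 6 =
        1 / 16 * (32 * p ^ 6) * (32 * q ^ 6) by intros; ring,
      cos_pow_six, cos_pow_six, mul_assoc, Finset.sum_mul_sum]
    simp only [hfreq, mul_mul_mul_comm]
  have hint (m n : ℕ) (b c : ℝ) : IntervalIntegrable
      (fun u => cos (m * (u - b)) * cos (n * (u - c))) MeasureTheory.volume 0 (2 * π) :=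
    Continuous.intervalIntegrable (by fun_prop) _ _
  have hphase : cos (2 * 2 * (π / 4 - a)) = -cos (4 * a) := by
    rw [show 2 * 2 * (π / 4 - a) = π - 4 * a by ring, cos_pi_sub]
  simp_rw [hexpand, intervalIntegral.integral_const_mul]
  rw [intervalIntegral.integral_finsetSum fun i _ => Continuous.intervalIntegrable (by fun_prop) _ _]
  simp_rw [intervalIntegral.integral_finsetSum fun j _ => (hint _ _ _ _).const_mul _,
    intervalIntegral.integral_const_mul, integral_cos_mul_cos_eq_ite]
  simp [Fin.sum_univ_four, hphase]
  ring

/-- For the reconstruction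
`x_r t θ = sin (2π·0.25·t + 2π·0.25·θ) + sin (−2π·0.25·t + 2π·0.75·θ)` of the
undersampled two-harmonic process, the sixth moment is the nonconstant function
`25/4 − (45/16)·cos (2π t)` of time, so the reconstructed process is nonstationary. -/
theorem reconstructed_sixth_moment
    (x_r : ℝ → ℝ → ℝ)
    (hx_r : ∀ t θ : ℝ, x_r t θ =
      Real.sin (2 * π * 0.25 * t + 2 * π * 0.25 * θ)
        + Real.sin (-(2 * π * 0.25 * t) + 2 * π * 0.75 * θ)) :
    (∀ t : ℝ, (1 / 4 : ℝ) * ∫ θ in (0:ℝ)..4, (x_r t θ) ^ 6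
        = 25 / 4 - (45 / 16) * Real.cos (2 * π * t)) ∧
    ∃ t₁ t₂ : ℝ,
      (1 / 4 : ℝ) * ∫ θ in (0:ℝ)..4, (x_r t₁ θ) ^ 6
        ≠ (1 / 4 : ℝ) * ∫ θ in (0:ℝ)..4, (x_r t₂ θ) ^ 6 := by
  have hmoment (t : ℝ) : (1 / 4 : ℝ) * ∫ θ in (0:ℝ)..4, (x_r t θ) ^ 6
      = 25 / 4 - 45 / 16 * cos (2 * π * t) := by
    have hx (θ : ℝ) :
        x_r t θ = sin (π / 2 * θ + π / 2 * t) + sin (3 * (π / 2 * θ) - π / 2 * t) := by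
      rw [hx_r]
      ring_nf
    simp_rw [hx]
    rw [intervalIntegral.integral_comp_mul_left
        (fun u => (sin (u + π / 2 * t) + sin (3 * u - π / 2 * t)) ^ 6) (by positivity),
      mul_zero, show π / 2 * 4 = 2 * π by ring, integral_sin_add_sin_three_mul_sub_pow_six,
      show 4 * (π / 2 * t) = 2 * π * t by ring, smul_eq_mul]
    field_simp
    ring
  refine ⟨hmoment, 0, 1 / 2, ?_⟩
  rw [hmoment, hmoment, mul_zero, show 2 * π * (1 / 2) = π by ring, cos_zero, cos_pi]
  norm_num
end

section
/- Let h : ℝ → ℝ be twice continuously differentiable and periodic with period T > 0, with finitely many critical points in [0, T). Let y₀ = max h, and suppose y₀ is attained in [0, T) exactly at the points t₁, …, t_m, each of which satisfies h''(t_α) < 0. Define, for y < y₀ with y in the range of h, p(y) = (1/T) · ∑_{t ∈ [0,T), h(t) = y} 1/|h'(t)|. Then lim_{y → y₀⁻} √(y₀ − y) · p(y) = (1/T) · ∑_{α=1}^m √2 / √|h''(t_α)|. In particular, the density of the sample statistics has a 1/√(y₀ − y) singularity at the maximum value of the waveform (and, symmetrically, at nondegenerate minima). -/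
/-!
By periodicity the sum over the preimages in `[0, T)` equals the sum over those in `[s, s + T)`,
where `s` is chosen not to be a maximum point, so that every maximum `t_α` is interior. By the
second-derivative test `h` is strictly increasing just left of `t_α` and strictly decreasing just
right of it, so for `y` close to `y₀` each `t_α` has exactly two nearby preimages
`a_α(y) < t_α < b_α(y)`, and by compactness there are no others. Both tend to `t_α` as `y → y₀⁻`,
and by l'Hôpital `(y₀ - h t) / h'(t)² → 1 / (2 |h''(t_α)|)` as `t → t_α`, so each of them
contributes `1 / √(2 |h''(t_α)|)` to the limit of `√(y₀ - y) · ∑ 1 / |h'|`.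
-/

open Set Function Filter Topology Metric

section InverseBranch

variable {α β : Type*} [LinearOrder α] [TopologicalSpace α] [OrderTopology α]
  [LinearOrder β] [TopologicalSpace β] [OrderTopology β]

theorem StrictMonoOn.tendsto_nhdsLT_of_eventually_apply_eq {f : α → β} {g : β → α} {a b : α}
    (hab : a < b) (hf : StrictMonoOn f (Icc a b))
    (hg : ∀ᶠ y in 𝓝[<] f b, g y ∈ Icc a b ∧ f (g y) = y) :
    Tendsto g (𝓝[<] f b) (𝓝[<] b) := by
  have hlt : ∀ᶠ y in 𝓝[<] f b, g y < b := by
    filter_upwards [hg, self_mem_nhdsWithin] with y ⟨hgy, hfgy⟩ (hy : y < f b)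
    exact hgy.2.lt_of_ne fun h => hy.ne (hfgy ▸ h ▸ rfl)
  refine tendsto_nhdsWithin_iff.2 ⟨tendsto_order.2 ⟨fun c hc => ?_, fun c hc => ?_⟩, hlt⟩
  · have hcb : max c a ∈ Icc a b := ⟨le_max_right _ _, (max_lt hc hab).le⟩
    filter_upwards [hg, Ioo_mem_nhdsLT
      ((hf.lt_iff_lt hcb (right_mem_Icc.2 hab.le)).2 (max_lt hc hab))] with y ⟨hgy, hfgy⟩ hy
    exact (le_max_left c a).trans_lt ((hf.lt_iff_lt hcb hgy).1 (hfgy.symm ▸ hy.1))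
  · filter_upwards [hlt] with y hy using hy.trans hc

theorem StrictAntiOn.tendsto_nhdsGT_of_eventually_apply_eq {f : α → β} {g : β → α} {a b : α}
    (hab : a < b) (hf : StrictAntiOn f (Icc a b))
    (hg : ∀ᶠ y in 𝓝[<] f a, g y ∈ Icc a b ∧ f (g y) = y) :
    Tendsto g (𝓝[<] f a) (𝓝[>] a) := by
  have hf' : StrictMonoOn (f ∘ OrderDual.ofDual)
      (Icc (OrderDual.toDual b) (OrderDual.toDual a)) := by
    rw [Icc_toDual]
    exact hf.dual_left
  exact hf'.tendsto_nhdsLT_of_eventually_apply_eq (g := fun y => OrderDual.toDual (g y))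
    (OrderDual.toDual_lt_toDual.2 hab) (hg.mono fun _ hy => ⟨⟨hy.1.2, hy.1.1⟩, hy.2⟩)

end InverseBranch

theorem inter_preimage_singleton_eq_iUnion {α β ι : Type*} {f : α → β} {s : Set α}
    {U : ι → Set α} {y : β} (hU : ∀ i, U i ⊆ s) (hy : ∀ x ∈ s \ ⋃ i, U i, f x ≠ y) :
    s ∩ f ⁻¹' {y} = ⋃ i, U i ∩ f ⁻¹' {y} := by
  rw [← iUnion_inter]
  exact Subset.antisymm (fun x ⟨hx, hxy⟩ => ⟨by_contra fun hxU => hy x ⟨hx, hxU⟩ hxy, hxy⟩)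
    (inter_subset_inter_left _ (iUnion_subset hU))

theorem eventually_ball_subset_of_mem_nhds {X : Type*} [PseudoMetricSpace X] {x : X} {s : Set X}
    (hs : s ∈ 𝓝 x) : ∀ᶠ δ in 𝓝[>] 0, ball x δ ⊆ s := by
  obtain ⟨ε, hε, hεs⟩ := Metric.mem_nhds_iff.1 hs
  filter_upwards [Ioo_mem_nhdsGT hε] with δ hδ
  exact (ball_subset_ball hδ.2.le).trans hεs

theorem eventually_pairwise_disjoint_ball {X ι : Type*} [MetricSpace X] [Finite ι] {t : ι → X}
    (ht : Injective t) : ∀ᶠ δ in 𝓝[>] 0, Pairwise (Disjoint on fun i => ball (t i) δ) := by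
  refine eventually_all.2 fun i => eventually_all.2 fun j => ?_
  by_cases hij : i = j
  · exact Eventually.of_forall fun _ h => (h hij).elim
  filter_upwards [Ioo_mem_nhdsGT (half_pos (dist_pos.2 (ht.ne hij)))] with δ hδ _
  exact ball_disjoint_ball (by linarith [hδ.2])

theorem eventually_strictMonoOn_strictAntiOn_of_deriv_deriv_neg {h : ℝ → ℝ} {t₀ : ℝ}
    (hh : Continuous h) (h₀ : deriv h t₀ = 0) (hc : deriv (deriv h) t₀ < 0) :
    ∀ᶠ δ in 𝓝[>] 0, StrictMonoOn h (Icc (t₀ - δ) t₀) ∧ StrictAntiOn h (Icc t₀ (t₀ + δ)) := by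
  have hsign : ∀ᶠ x in 𝓝[≠] t₀, SignType.sign (deriv h x) = SignType.sign (t₀ - x) :=
    nhdsWithin_le_nhds (eventually_nhdsWithin_sign_eq_of_deriv_neg hc h₀)
  obtain ⟨l, hl, hpos⟩ := mem_nhdsLT_iff_exists_Ioo_subset.1 (deriv_pos_left_of_sign_deriv hsign)
  obtain ⟨r, hr, hneg⟩ := mem_nhdsGT_iff_exists_Ioo_subset.1 (deriv_neg_right_of_sign_deriv hsign)
  filter_upwards [Ioo_mem_nhdsGT (sub_pos.2 hl), Ioo_mem_nhdsGT (sub_pos.2 hr)] with δ hδl hδr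
  constructor
  · refine strictMonoOn_of_deriv_pos (convex_Icc _ _) hh.continuousOn fun x hx => hpos ?_
    rw [interior_Icc] at hx
    exact ⟨by linarith [hx.1, hδl.2], hx.2⟩
  · refine strictAntiOn_of_deriv_neg (convex_Icc _ _) hh.continuousOn fun x hx => hneg ?_
    rw [interior_Icc] at hx
    exact ⟨hx.1, by linarith [hx.2, hδr.2]⟩

theorem tendsto_sqrt_sub_div_abs_deriv_of_deriv_deriv_neg {h : ℝ → ℝ} {t₀ : ℝ}
    (hh : ContDiff ℝ 2 h) (h₀ : deriv h t₀ = 0) (hc : deriv (deriv h) t₀ < 0) :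
    Tendsto (fun t => √(h t₀ - h t) / |deriv h t|) (𝓝[≠] t₀)
      (𝓝 (√(2 * |deriv (deriv h) t₀|))⁻¹) := by
  have hh' : ContDiff ℝ 1 (deriv h) := hh.iterate_deriv' 1 1
  have hd : Differentiable ℝ h := hh.differentiable (by norm_num)
  have hd' : Differentiable ℝ (deriv h) := hh'.differentiable one_ne_zero
  have hcont : Continuous (deriv (deriv h)) := hh'.continuous_deriv le_rfl
  have hne : ∀ᶠ t in 𝓝[≠] t₀, deriv h t ≠ 0 := by
    simpa [h₀] using (hd' t₀).hasDerivAt.eventually_ne hc.ne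
  have hne' : ∀ᶠ t in 𝓝[≠] t₀, deriv (deriv h) t ≠ 0 :=
    nhdsWithin_le_nhds (hcont.continuousAt.eventually_ne hc.ne)
  have hratio : Tendsto (fun t => (h t₀ - h t) / deriv h t ^ 2) (𝓝[≠] t₀)
      (𝓝 (2 * |deriv (deriv h) t₀|)⁻¹) := by
    refine HasDerivAt.lhopital_zero_nhdsNE (f' := fun t => -deriv h t)
      (g' := fun t => 2 * deriv h t ^ 1 * deriv (deriv h) t)
      (Eventually.of_forall fun t => (hd t).hasDerivAt.const_sub _)
      (Eventually.of_forall fun t => (hd' t).hasDerivAt.pow 2) ?_ ?_ ?_ ?_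
    · filter_upwards [hne, hne'] with t h1 h2
      positivity
    · simpa using tendsto_nhdsWithin_of_tendsto_nhds
        (tendsto_const_nhds.sub (hd.continuous.tendsto t₀) : Tendsto (fun t => h t₀ - h t) _ _)
    · simpa [h₀] using tendsto_nhdsWithin_of_tendsto_nhds ((hd'.continuous.tendsto t₀).pow 2)
    · have hlim : Tendsto (fun t => -(2 * deriv (deriv h) t)⁻¹) (𝓝[≠] t₀)
          (𝓝 (2 * |deriv (deriv h) t₀|)⁻¹) := by
        rw [abs_of_neg hc, mul_neg, inv_neg]
        exact tendsto_nhdsWithin_of_tendsto_nhds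
          ((tendsto_const_nhds.mul (hcont.tendsto t₀)).inv₀ (by linarith)).neg
      refine hlim.congr' ?_
      filter_upwards [hne] with t ht
      field_simp
  rw [← Real.sqrt_inv]
  refine ((Real.continuous_sqrt.tendsto _).comp hratio).congr fun t => ?_
  simp [Real.sqrt_div' _ (sq_nonneg _), Real.sqrt_sq_eq_abs]

theorem ball_inter_preimage_singleton_eq_pair {h : ℝ → ℝ} {t₀ δ a b y : ℝ}
    (hmono : StrictMonoOn h (Icc (t₀ - δ) t₀)) (hanti : StrictAntiOn h (Icc t₀ (t₀ + δ)))
    (ha : a ∈ Ioo (t₀ - δ) t₀) (hb : b ∈ Ioo t₀ (t₀ + δ)) (hay : h a = y) (hby : h b = y) :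
    ball t₀ δ ∩ h ⁻¹' {y} = {a, b} := by
  ext t
  simp only [mem_inter_iff, Real.ball_eq_Ioo, mem_Ioo, mem_preimage, mem_singleton_iff,
    mem_insert_iff]
  constructor
  · rintro ⟨⟨ht₁, ht₂⟩, hty⟩
    rcases le_total t t₀ with htt₀ | htt₀
    · exact Or.inl (hmono.injOn ⟨ht₁.le, htt₀⟩ ⟨ha.1.le, ha.2.le⟩ (hty.trans hay.symm))
    · exact Or.inr (hanti.injOn ⟨htt₀, ht₂.le⟩ ⟨hb.1.le, hb.2.le⟩ (hty.trans hby.symm))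
  · rintro (rfl | rfl)
    · exact ⟨⟨ha.1, by linarith [ha.1, ha.2]⟩, hay⟩
    · exact ⟨⟨by linarith [hb.1, hb.2], hb.2⟩, hby⟩

theorem exists_tendsto_ball_inter_preimage_singleton_eq_pair {h : ℝ → ℝ} {t₀ δ : ℝ}
    (hδ : 0 < δ) (hh : Continuous h) (hmono : StrictMonoOn h (Icc (t₀ - δ) t₀))
    (hanti : StrictAntiOn h (Icc t₀ (t₀ + δ))) :
    ∃ a b : ℝ → ℝ, Tendsto a (𝓝[<] h t₀) (𝓝[<] t₀) ∧ Tendsto b (𝓝[<] h t₀) (𝓝[>] t₀) ∧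
      ∀ᶠ y in 𝓝[<] h t₀, a y ≠ b y ∧ ball t₀ δ ∩ h ⁻¹' {y} = {a y, b y} := by
  set a := invFunOn h (Icc (t₀ - δ) t₀)
  set b := invFunOn h (Icc t₀ (t₀ + δ))
  have ha : ∀ᶠ y in 𝓝[<] h t₀, a y ∈ Icc (t₀ - δ) t₀ ∧ h (a y) = y := by
    filter_upwards [Ioo_mem_nhdsLT (hmono (left_mem_Icc.2 (by linarith))
      (right_mem_Icc.2 (by linarith)) (by linarith))] with y hy
    exact invFunOn_pos (intermediate_value_Icc (by linarith) hh.continuousOn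
      (Ioo_subset_Icc_self hy))
  have hb : ∀ᶠ y in 𝓝[<] h t₀, b y ∈ Icc t₀ (t₀ + δ) ∧ h (b y) = y := by
    filter_upwards [Ioo_mem_nhdsLT (hanti (left_mem_Icc.2 (by linarith))
      (right_mem_Icc.2 (by linarith)) (by linarith))] with y hy
    exact invFunOn_pos (intermediate_value_Icc' (by linarith) hh.continuousOn
      (Ioo_subset_Icc_self hy))
  have ha_lim := hmono.tendsto_nhdsLT_of_eventually_apply_eq (by linarith) ha
  have hb_lim := hanti.tendsto_nhdsGT_of_eventually_apply_eq (by linarith) hb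
  refine ⟨a, b, ha_lim, hb_lim, ?_⟩
  filter_upwards [ha, hb, ha_lim.eventually (Ioo_mem_nhdsLT (by linarith : t₀ - δ < t₀)),
    hb_lim.eventually (Ioo_mem_nhdsGT (by linarith : t₀ < t₀ + δ))]
    with y ⟨_, hay⟩ ⟨_, hby⟩ ha' hb'
  exact ⟨(ha'.2.trans hb'.1).ne, ball_inter_preimage_singleton_eq_pair hmono hanti ha' hb' hay hby⟩

theorem eventually_tendsto_sqrt_mul_tsum_ball_inter_preimage {h : ℝ → ℝ} {t₀ : ℝ}
    (hh : ContDiff ℝ 2 h) (h₀ : deriv h t₀ = 0) (hc : deriv (deriv h) t₀ < 0) :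
    ∀ᶠ δ in 𝓝[>] 0, (∀ᶠ y in 𝓝[<] h t₀, (ball t₀ δ ∩ h ⁻¹' {y}).Finite) ∧
      Tendsto (fun y => √(h t₀ - y) * ∑' t : ↥(ball t₀ δ ∩ h ⁻¹' {y}), 1 / |deriv h t|)
        (𝓝[<] h t₀) (𝓝 (√2 / √|deriv (deriv h) t₀|)) := by
  filter_upwards [eventually_strictMonoOn_strictAntiOn_of_deriv_deriv_neg hh.continuous h₀ hc,
    self_mem_nhdsWithin] with δ ⟨hmono, hanti⟩ (hδ : 0 < δ)
  obtain ⟨a, b, ha, hb, hpair⟩ :=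
    exists_tendsto_ball_inter_preimage_singleton_eq_pair hδ hh.continuous hmono hanti
  refine ⟨hpair.mono fun y hy => hy.2 ▸ toFinite _, ?_⟩
  have hS := tendsto_sqrt_sub_div_abs_deriv_of_deriv_deriv_neg hh h₀ hc
  have hval : √2 / √|deriv (deriv h) t₀| =
      (√(2 * |deriv (deriv h) t₀|))⁻¹ + (√(2 * |deriv (deriv h) t₀|))⁻¹ := by
    have h2 : √2 ≠ 0 := by positivity
    rw [Real.sqrt_mul zero_le_two]
    field_simp
    norm_num
  rw [hval]
  refine ((hS.comp (ha.mono_right (nhdsLT_le_nhdsNE t₀))).add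
    (hS.comp (hb.mono_right (nhdsGT_le_nhdsNE t₀)))).congr' ?_
  filter_upwards [hpair] with y ⟨hne, hset⟩
  have hay : h (a y) = y := (hset ▸ mem_insert _ _ : a y ∈ ball t₀ δ ∩ h ⁻¹' {y}).2
  have hby : h (b y) = y := (hset ▸ mem_insert_of_mem _ rfl : b y ∈ ball t₀ δ ∩ h ⁻¹' {y}).2
  rw [hset, ← Finset.coe_pair, Finset.tsum_subtype' _ fun t => 1 / |deriv h t|,
    Finset.sum_pair hne]
  simp only [comp_apply, hay, hby]
  ring

theorem tendsto_sqrt_mul_tsum_Ico_inter_preimage {h : ℝ → ℝ} (hh : ContDiff ℝ 2 h)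
    {a b y₀ : ℝ} {ι : Type*} [Fintype ι] {t : ι → ℝ} (ht : Injective t)
    (ht_mem : ∀ i, t i ∈ Ioo a b) (ht_val : ∀ i, h (t i) = y₀)
    (hlt : ∀ u ∈ Icc a b \ range t, h u < y₀) (hc : ∀ i, deriv (deriv h) (t i) < 0) :
    Tendsto (fun y => √(y₀ - y) * ∑' u : ↥(Ico a b ∩ h ⁻¹' {y}), 1 / |deriv h u|) (𝓝[<] y₀)
      (𝓝 (∑ i, √2 / √|deriv (deriv h) (t i)|)) := by
  have hmax : ∀ u ∈ Icc a b, h u ≤ y₀ := by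
    intro u hu
    by_cases hut : u ∈ range t
    · obtain ⟨i, rfl⟩ := hut
      exact (ht_val i).le
    · exact (hlt u ⟨hu, hut⟩).le
  have hloc : ∀ i, ∀ᶠ δ in 𝓝[>] 0, (∀ᶠ y in 𝓝[<] y₀, (ball (t i) δ ∩ h ⁻¹' {y}).Finite) ∧
      Tendsto (fun y => √(y₀ - y) * ∑' u : ↥(ball (t i) δ ∩ h ⁻¹' {y}), 1 / |deriv h u|)
        (𝓝[<] y₀) (𝓝 (√2 / √|deriv (deriv h) (t i)|)) := by
    intro i
    have h₀ : deriv h (t i) = 0 := (IsMaxOn.isLocalMax (fun u hu => (ht_val i).symm ▸ hmax u hu)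
      (Icc_mem_nhds (ht_mem i).1 (ht_mem i).2)).deriv_eq_zero
    simpa only [ht_val i] using eventually_tendsto_sqrt_mul_tsum_ball_inter_preimage hh h₀ (hc i)
  have hball : ∀ i, ∀ᶠ δ in 𝓝[>] 0, ball (t i) δ ⊆ Ioo a b :=
    fun i => eventually_ball_subset_of_mem_nhds (isOpen_Ioo.mem_nhds (ht_mem i))
  obtain ⟨δ, hδ, hloc, hsub, hdisj⟩ := (eventually_mem_nhdsWithin.and ((eventually_all.2 hloc).and
    ((eventually_all.2 hball).and (eventually_pairwise_disjoint_ball ht)))).exists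
  have hK : ∀ᶠ y in 𝓝 y₀, ∀ u ∈ Icc a b \ ⋃ i, ball (t i) δ, h u < y := by
    have hKc : IsCompact (Icc a b \ ⋃ i, ball (t i) δ) :=
      isCompact_Icc.diff (isOpen_iUnion fun _ => isOpen_ball)
    refine hKc.eventually_forall_of_forall_eventually fun u hu =>
      (isOpen_lt (hh.continuous.comp continuous_snd) continuous_fst).mem_nhds ?_
    refine hlt u ⟨hu.1, ?_⟩
    rintro ⟨i, rfl⟩
    exact hu.2 (mem_iUnion.2 ⟨i, mem_ball_self (mem_Ioi.1 hδ)⟩)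
  have hsplit : ∀ᶠ y in 𝓝[<] y₀, ∑' u : ↥(Ico a b ∩ h ⁻¹' {y}), 1 / |deriv h u| =
      ∑ i, ∑' u : ↥(ball (t i) δ ∩ h ⁻¹' {y}), 1 / |deriv h u| := by
    filter_upwards [nhdsWithin_le_nhds hK, eventually_all.2 fun i => (hloc i).1] with y hy hfin
    rw [inter_preimage_singleton_eq_iUnion (fun i => (hsub i).trans Ioo_subset_Ico_self)
      fun u hu => (hy u ⟨Ico_subset_Icc_self hu.1, hu.2⟩).ne,
      ← Summable.tsum_finset_bUnion_disjoint (f := fun u => 1 / |deriv h u|)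
        (fun i _ j _ hij => (hdisj hij).mono inter_subset_left inter_subset_left)
        fun i _ => (hfin i).summable _]
    exact tsum_congr_set_coe (fun u => 1 / |deriv h u|) (by simp)
  refine (tendsto_finsetSum _ fun i _ => (hloc i).2).congr' ?_
  filter_upwards [hsplit] with y hy
  rw [hy, Finset.mul_sum]

namespace Function.Periodic

variable {h g : ℝ → ℝ} {T : ℝ}

theorem deriv (hper : Periodic h T) : Periodic (deriv h) T := fun t => by
  rw [← deriv_comp_add_const, funext hper]

theorem apply_toIcoMod (hper : Periodic h T) (hT : 0 < T) (a t : ℝ) :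
    h (toIcoMod hT a t) = h t := by
  rw [← self_sub_toIcoDiv_zsmul, hper.sub_zsmul_eq]

theorem tsum_Ico_inter_preimage_eq (hper : Periodic h T) (hg : Periodic g T) (hT : 0 < T)
    (a b y : ℝ) :
    ∑' u : ↥(Ico a (a + T) ∩ h ⁻¹' {y}), g u = ∑' u : ↥(Ico b (b + T) ∩ h ⁻¹' {y}), g u := by
  let e : ↥(Ico a (a + T) ∩ h ⁻¹' {y}) ≃ ↥(Ico b (b + T) ∩ h ⁻¹' {y}) :=
    { toFun u := ⟨toIcoMod hT b u, toIcoMod_mem_Ico .., (hper.apply_toIcoMod hT b u).trans u.2.2⟩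
      invFun u := ⟨toIcoMod hT a u, toIcoMod_mem_Ico .., (hper.apply_toIcoMod hT a u).trans u.2.2⟩
      left_inv u := Subtype.ext <| by simp [toIcoMod_toIcoMod, (toIcoMod_eq_self hT).2 u.2.1]
      right_inv u := Subtype.ext <| by simp [toIcoMod_toIcoMod, (toIcoMod_eq_self hT).2 u.2.1] }
  rw [← e.tsum_eq]
  exact tsum_congr fun u => (hg.apply_toIcoMod hT b u).symm

end Function.Periodic

theorem tendsto_sqrt_mul_tsum_Ico_inter_preimage_of_periodic {h : ℝ → ℝ} {T : ℝ}
    (hper : Periodic h T) (hT : 0 < T) (hh : ContDiff ℝ 2 h) {y₀ : ℝ} {ι : Type*} [Fintype ι]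
    {t : ι → ℝ} (ht : Injective t) (ht_mem : ∀ i, t i ∈ Ico 0 T) (ht_val : ∀ i, h (t i) = y₀)
    (hlt : ∀ u ∈ Ico 0 T \ range t, h u < y₀) (hc : ∀ i, deriv (deriv h) (t i) < 0) :
    Tendsto (fun y => √(y₀ - y) * ∑' u : ↥(Ico 0 T ∩ h ⁻¹' {y}), 1 / |deriv h u|) (𝓝[<] y₀)
      (𝓝 (∑ i, √2 / √|deriv (deriv h) (t i)|)) := by
  obtain ⟨s, hs, hs_t⟩ : ∃ s ∈ Ioo 0 T, s ∉ range t :=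
    ((Ioo_infinite hT).sdiff (finite_range t)).nonempty
  have hmod₀ : ∀ x ∈ Ico 0 T, toIcoMod hT 0 x = x := fun x hx =>
    (toIcoMod_eq_self hT).2 (by simpa using hx)
  have hmod : ∀ x y, toIcoMod hT s x = toIcoMod hT s y ↔ toIcoMod hT 0 x = toIcoMod hT 0 y :=
    fun x y => (toIcoMod_eq_toIcoMod hT).trans (toIcoMod_eq_toIcoMod hT).symm
  set t' := fun i => toIcoMod hT s (t i)
  have ht'_inj : Injective t' := fun i j hij => by
    rwa [hmod, hmod₀ _ (ht_mem i), hmod₀ _ (ht_mem j), ht.eq_iff] at hij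
  have ht'_mem : ∀ i, t' i ∈ Ioo s (s + T) := by
    intro i
    refine ⟨(toIcoMod_mem_Ico hT s (t i)).1.lt_of_ne fun he => hs_t ⟨i, ?_⟩,
      (toIcoMod_mem_Ico hT s (t i)).2⟩
    have := (toIcoMod_apply_left hT s).trans he
    rwa [hmod, hmod₀ _ (Ioo_subset_Ico_self hs), hmod₀ _ (ht_mem i), eq_comm] at this
  have ht'_lt : ∀ u ∈ Icc s (s + T) \ range t', h u < y₀ := by
    rintro u ⟨hu, hu_t'⟩
    rcases hu.2.eq_or_lt with rfl | hu_lt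
    · rw [hper s]
      exact hlt s ⟨Ioo_subset_Ico_self hs, hs_t⟩
    rw [← hper.apply_toIcoMod hT 0 u]
    refine hlt _ ⟨by simpa using toIcoMod_mem_Ico hT 0 u, fun ⟨i, hi⟩ => hu_t' ⟨i, ?_⟩⟩
    have : toIcoMod hT s (t i) = toIcoMod hT s u := (hmod _ _).2 (by rw [hmod₀ _ (ht_mem i), hi])
    change toIcoMod hT s (t i) = u
    rw [this, toIcoMod_eq_self hT]
    exact ⟨hu.1, hu_lt⟩
  have hc' : ∀ i, deriv (deriv h) (t' i) = deriv (deriv h) (t i) :=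
    fun i => hper.deriv.deriv.apply_toIcoMod hT s (t i)
  have key := tendsto_sqrt_mul_tsum_Ico_inter_preimage hh ht'_inj ht'_mem
    (fun i => (hper.apply_toIcoMod hT s (t i)).trans (ht_val i)) ht'_lt (fun i => hc' i ▸ hc i)
  simp only [hc'] at key
  refine key.congr fun y => ?_
  have := hper.tsum_Ico_inter_preimage_eq (hper.deriv.comp fun x => 1 / |x|) hT 0 s y
  rw [zero_add] at this
  exact congrArg (√(y₀ - y) * ·) this.symm

theorem density_singularity_at_maximum_general
    (h : ℝ → ℝ) (T : ℝ) (hT : 0 < T)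
    (hsmooth : ContDiff ℝ 2 h) (hper : ∀ t : ℝ, h (t + T) = h t)
    (y₀ : ℝ) (hmax : ∀ t : ℝ, h t ≤ y₀)
    (m : ℕ) (hm : 0 < m) (tp : Fin m → ℝ)
    (htp_mem : ∀ α, tp α ∈ Set.Ico (0:ℝ) T)
    (htp_val : ∀ α, h (tp α) = y₀)
    (htp_inj : Function.Injective tp)
    (htp_all : ∀ t ∈ Set.Ico (0:ℝ) T, h t = y₀ → ∃ α, t = tp α)
    (htp_nondeg : ∀ α, deriv (deriv h) (tp α) < 0)
    (p : ℝ → ℝ)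
    (hp : ∀ y : ℝ, y < y₀ → y ∈ Set.range h →
      p y = (1 / T) *
        ∑' t : {t : ℝ // t ∈ Set.Ico (0:ℝ) T ∧ h t = y}, 1 / |deriv h (t : ℝ)|) :
    Tendsto (fun y : ℝ => Real.sqrt (y₀ - y) * p y) (nhdsWithin y₀ (Set.Iio y₀))
      (nhds ((1 / T) *
        ∑ α, Real.sqrt 2 / Real.sqrt |deriv (deriv h) (tp α)|)) := by
  have hlt : ∀ u ∈ Ico 0 T \ range tp, h u < y₀ := fun u ⟨hu, hu_tp⟩ =>
    (hmax u).lt_of_ne fun he => hu_tp (let ⟨α, hα⟩ := htp_all u hu he; ⟨α, hα.symm⟩)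
  obtain ⟨u, hu⟩ := ((Ico_infinite hT).sdiff (finite_range tp)).nonempty
  have hrange : ∀ᶠ y in 𝓝[<] y₀, y ∈ range h := by
    filter_upwards [Ioo_mem_nhdsLT (hlt u hu)] with y hy
    exact intermediate_value_univ u (tp ⟨0, hm⟩) hsmooth.continuous
      ⟨hy.1.le, (htp_val _).symm ▸ hy.2.le⟩
  refine ((tendsto_sqrt_mul_tsum_Ico_inter_preimage_of_periodic hper hT hsmooth htp_inj htp_mem
    htp_val hlt htp_nondeg).const_mul (1 / T)).congr' ?_
  filter_upwards [hrange, self_mem_nhdsWithin] with y hy hy'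
  rw [hp y hy' hy, mul_left_comm]
  -- `{t // t ∈ Ico 0 T ∧ h t = y}` is `↥(Ico 0 T ∩ h ⁻¹' {y})` by unfolding
  rfl

/-- The density `p y = (1/T) ∑_{t ∈ [0,T), h t = y} 1/|h' t|` of the sample statistics of
a twice continuously differentiable `T`-periodic waveform `h` has a `1/√(y₀ − y)`
singularity at the maximum value `y₀`: if `y₀` is attained in `[0,T)` exactly at the
nondegenerate maxima `tp 1, …, tp m` (each with `h'' (tp α) < 0`), then
`√(y₀ − y) · p y → (1/T) ∑_α √2 / √|h'' (tp α)|` as `y → y₀⁻`. -/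
theorem density_singularity_at_maximum
    (h : ℝ → ℝ) (T : ℝ) (hT : 0 < T)
    (hsmooth : ContDiff ℝ 2 h) (hper : ∀ t : ℝ, h (t + T) = h t)
    (hcrit : {t : ℝ | t ∈ Set.Ico (0:ℝ) T ∧ deriv h t = 0}.Finite)
    (y₀ : ℝ) (hmax : ∀ t : ℝ, h t ≤ y₀)
    (m : ℕ) (hm : 0 < m) (tp : Fin m → ℝ)
    (htp_mem : ∀ α, tp α ∈ Set.Ico (0:ℝ) T)
    (htp_val : ∀ α, h (tp α) = y₀)
    (htp_inj : Function.Injective tp)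
    (htp_all : ∀ t ∈ Set.Ico (0:ℝ) T, h t = y₀ → ∃ α, t = tp α)
    (htp_nondeg : ∀ α, deriv (deriv h) (tp α) < 0)
    (p : ℝ → ℝ)
    (hp : ∀ y : ℝ, y < y₀ → y ∈ Set.range h →
      p y = (1 / T) *
        ∑' t : {t : ℝ // t ∈ Set.Ico (0:ℝ) T ∧ h t = y}, 1 / |deriv h (t : ℝ)|) :
    Tendsto (fun y : ℝ => Real.sqrt (y₀ - y) * p y) (nhdsWithin y₀ (Set.Iio y₀))
      (nhds ((1 / T) *
        ∑ α, Real.sqrt 2 / Real.sqrt |deriv (deriv h) (tp α)|)) :=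
  density_singularity_at_maximum_general h T hT hsmooth hper y₀ hmax m hm tp htp_mem htp_val htp_inj
    htp_all htp_nondeg p hp
end
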